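/- For every natural number n ≥ 0 and every real x, P_n(x) = ∑_{m : n ≤ 3m and 2m ≤ n} (g̃_{m, n−2m} − g̃_{m, n−2m−1}) · m! · x^{3m−n}/(3m−n)!, where the sum is over all integers m with n/3 ≤ m ≤ n/2 and where g̃_{m,−1} is interpreted as 0 (this term occurs only when n = 2m). -/

import Mathlib

/-!
$P_n$ and $Q_n$ are determined by their recurrence, so it suffices to check that the closed
form, together with the analogous one $Q_n = \sum_m m!\,\tilde g_{m,n-2m-1}\,x^{3m+1-n}/(3m+1-n)!$,
satisfies it. Writing the monomials as divided powers $x^j/j!$, read as $0$ for $j < 0$,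
differentiation and multiplication by $x$ act uniformly on the exponents, and the recurrence
reduces to the identity
$(m+1)(\tilde g_{m+1,k} - 2\tilde g_{m+1,k-1} + \tilde g_{m+1,k-2}) = (m+1-k)\,\tilde g_{m,k}$
for all integers $k$. With $u = 1 - t + t^2/3$ and $f_m = u^{-(m+1)}$, it follows by comparing
Taylor coefficients in $f_m = u f_{m+1}$ and $f_m' = (m+1)(1 - 2t/3) f_{m+1}$.
-/

open Polynomial

/-- The pair of polynomial families `(P n, Q n)` defined by the recurrence
`P_{n+1} = P_n' + X·Q_n`, `Q_{n+1} = P_n + Q_n'` with `P_0 = 1`, `Q_0 = 0`. -/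
noncomputable def airyPQ : ℕ → Polynomial ℝ × Polynomial ℝ
  | 0 => (1, 0)
  | n + 1 =>
      ((airyPQ n).1.derivative + X * (airyPQ n).2,
       (airyPQ n).1 + (airyPQ n).2.derivative)

noncomputable def airyP (n : ℕ) : Polynomial ℝ := (airyPQ n).1
noncomputable def airyQ (n : ℕ) : Polynomial ℝ := (airyPQ n).2

/-- `g̃_{m,k}` for an integer index `k`: the `k`-th Taylor coefficient at `0` of
`(1 − t + t²/3)^{−(m+1)}` when `k ≥ 0`, and `0` when `k < 0`. -/
noncomputable def gTilde (m : ℕ) (k : ℤ) : ℝ :=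
  if k < 0 then 0
  else iteratedDeriv k.toNat (fun t : ℝ => (1 - t + t ^ 2 / 3) ^ (-(m + 1 : ℤ))) 0 /
    (Nat.factorial k.toNat : ℝ)

open scoped ContDiff Nat

noncomputable def taylorCoeff (f : ℝ → ℝ) (k : ℤ) : ℝ :=
  if k < 0 then 0 else iteratedDeriv k.toNat f 0 / (k.toNat ! : ℝ)

section TaylorCoeff

variable {f g : ℝ → ℝ}

theorem taylorCoeff_of_neg {k : ℤ} (hk : k < 0) : taylorCoeff f k = 0 := if_pos hk

theorem taylorCoeff_natCast (k : ℕ) : taylorCoeff f k = iteratedDeriv k f 0 / (k ! : ℝ) := by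
  simp [taylorCoeff]

theorem taylorCoeff_add (hf : ContDiff ℝ ∞ f) (hg : ContDiff ℝ ∞ g) (k : ℤ) :
    taylorCoeff (fun t => f t + g t) k = taylorCoeff f k + taylorCoeff g k := by
  unfold taylorCoeff
  split_ifs
  · simp
  · rw [iteratedDeriv_fun_add (hf.contDiffAt.of_le (by exact_mod_cast le_top))
      (hg.contDiffAt.of_le (by exact_mod_cast le_top)), add_div]

theorem taylorCoeff_const_mul (c : ℝ) (f : ℝ → ℝ) (k : ℤ) :
    taylorCoeff (fun t => c * f t) k = c * taylorCoeff f k := by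
  unfold taylorCoeff
  split_ifs
  · simp
  · rw [iteratedDeriv_const_mul_field, mul_div_assoc]

theorem taylorCoeff_pow_mul (hf : ContDiff ℝ ∞ f) (j : ℕ) (k : ℤ) :
    taylorCoeff (fun t => t ^ j * f t) k = taylorCoeff f (k - j) := by
  rcases lt_or_ge k 0 with hk | hk
  · rw [taylorCoeff_of_neg hk, taylorCoeff_of_neg (by omega)]
  lift k to ℕ using hk
  rw [taylorCoeff_natCast,
    iteratedDeriv_fun_mul (by fun_prop) (hf.contDiffAt.of_le (by exact_mod_cast le_top))]
  simp only [iteratedDeriv_fun_pow_zero, Nat.cast_ite, Nat.cast_zero, mul_ite, ite_mul, mul_zero,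
    zero_mul, Finset.sum_ite_eq', Finset.mem_range]
  split_ifs with hjk
  · obtain ⟨i, rfl⟩ : ∃ i, k = i + j := ⟨k - j, by omega⟩
    rw [Nat.cast_add, add_sub_cancel_right, taylorCoeff_natCast, Nat.add_sub_cancel,
      ← Nat.add_choose_mul_factorial_mul_factorial i j]
    have hchoose : ((i + j).choose j : ℝ) ≠ 0 := by
      exact_mod_cast (Nat.choose_pos (Nat.le_add_left j i)).ne'
    push_cast
    field_simp
  · rw [zero_div, taylorCoeff_of_neg (by omega)]

theorem taylorCoeff_quadratic_mul (hf : ContDiff ℝ ∞ f) (a b c : ℝ) (k : ℤ) :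
    taylorCoeff (fun t => (a + b * t + c * t ^ 2) * f t) k =
      a * taylorCoeff f k + b * taylorCoeff f (k - 1) + c * taylorCoeff f (k - 2) := by
  have hsplit : (fun t => (a + b * t + c * t ^ 2) * f t) =
      fun t => (a * (t ^ 0 * f t) + b * (t ^ 1 * f t)) + c * (t ^ 2 * f t) := by
    funext t; ring
  rw [hsplit, taylorCoeff_add (by fun_prop) (by fun_prop),
    taylorCoeff_add (by fun_prop) (by fun_prop), taylorCoeff_const_mul, taylorCoeff_const_mul,
    taylorCoeff_const_mul, taylorCoeff_pow_mul hf, taylorCoeff_pow_mul hf, taylorCoeff_pow_mul hf]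
  simp

theorem taylorCoeff_deriv (k : ℤ) :
    taylorCoeff (deriv f) k = (k + 1) * taylorCoeff f (k + 1) := by
  rcases lt_or_ge k 0 with hk | hk
  · rcases eq_or_lt_of_le (Int.add_one_le_iff.2 hk) with hk1 | hk1
    · rw [taylorCoeff_of_neg hk, show (k : ℝ) + 1 = 0 by exact_mod_cast hk1, zero_mul]
    · rw [taylorCoeff_of_neg hk, taylorCoeff_of_neg hk1, mul_zero]
  · lift k to ℕ using hk
    rw [show (k : ℤ) + 1 = (k + 1 : ℕ) by push_cast; ring, taylorCoeff_natCast,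
      taylorCoeff_natCast, iteratedDeriv_succ', Nat.factorial_succ]
    push_cast
    field_simp

end TaylorCoeff

noncomputable def divPow (j : ℤ) : ℝ[X] :=
  if j < 0 then 0 else C ((j.toNat ! : ℝ)⁻¹) * X ^ j.toNat

theorem divPow_of_neg {j : ℤ} (hj : j < 0) : divPow j = 0 := if_pos hj

theorem divPow_natCast (j : ℕ) : divPow j = C ((j ! : ℝ)⁻¹) * X ^ j := by
  simp [divPow]

theorem derivative_divPow (j : ℤ) : derivative (divPow j) = divPow (j - 1) := by
  rcases lt_or_ge j 1 with hj | hj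
  · rw [divPow_of_neg (by omega : j - 1 < 0)]
    rcases lt_or_ge j 0 with hj0 | hj0
    · rw [divPow_of_neg hj0, derivative_zero]
    · rw [show j = ((0 : ℕ) : ℤ) by omega, divPow_natCast]
      simp
  · obtain ⟨i, rfl⟩ : ∃ i : ℕ, j = (i + 1 : ℕ) := ⟨(j - 1).toNat, by omega⟩
    rw [divPow_natCast, show ((i + 1 : ℕ) : ℤ) - 1 = i by push_cast; ring, divPow_natCast,
      derivative_C_mul_X_pow, Nat.factorial_succ, Nat.add_sub_cancel]
    congr 2
    push_cast
    field_simp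

theorem X_mul_divPow (j : ℤ) : X * divPow j = C ((j : ℝ) + 1) * divPow (j + 1) := by
  rcases lt_or_ge j 0 with hj | hj
  · rw [divPow_of_neg hj, mul_zero]
    rcases eq_or_lt_of_le (Int.add_one_le_iff.2 hj) with hj1 | hj1
    · rw [show (j : ℝ) + 1 = 0 by exact_mod_cast hj1, C_0, zero_mul]
    · rw [divPow_of_neg hj1, mul_zero]
  · lift j to ℕ using hj
    rw [show (j : ℤ) + 1 = (j + 1 : ℕ) by push_cast; ring, divPow_natCast, divPow_natCast,
      Nat.factorial_succ, mul_left_comm, ← pow_succ', ← mul_assoc, ← C_mul]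
    congr 2
    push_cast
    field_simp

theorem Finset.sum_range_eq_sum_range_succ_of_eq_zero {M : Type*} [AddCommMonoid M] {n : ℕ}
    (f : ℕ → M) (h0 : f 0 = 0) (hn : f (n + 1) = 0) :
    ∑ m ∈ Finset.range (n + 1), f m = ∑ m ∈ Finset.range (n + 1), f (m + 1) := by
  have := Finset.sum_range_succ' f (n + 1)
  rwa [Finset.sum_range_succ, hn, h0, add_zero, add_zero] at this

section Recurrence

variable (g : ℕ → ℤ → ℝ)

def SecondDiffRelation : Prop :=
  ∀ (m : ℕ) (k : ℤ),
    ((m : ℝ) + 1) * (g (m + 1) k - 2 * g (m + 1) (k - 1) + g (m + 1) (k - 2)) =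
      ((m : ℝ) + 1 - k) * g m k

noncomputable def airyCoeffP (n m : ℕ) : ℝ := m ! * (g m (n - 2 * m) - g m (n - 2 * m - 1))

noncomputable def airyCoeffQ (n m : ℕ) : ℝ := m ! * g m (n - 2 * m - 1)

noncomputable def explicitP (n : ℕ) : ℝ[X] :=
  ∑ m ∈ Finset.range (n + 1), C (airyCoeffP g n m) * divPow (3 * m - n)

noncomputable def explicitQ (n : ℕ) : ℝ[X] :=
  ∑ m ∈ Finset.range (n + 1), C (airyCoeffQ g n m) * divPow (3 * m + 1 - n)

variable {g}

theorem airyCoeffP_succ_succ (hrel : SecondDiffRelation g) (n m : ℕ) :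
    airyCoeffP g n (m + 1) + airyCoeffQ g n m * (((3 * m + 1 - n : ℤ) : ℝ) + 1) =
      airyCoeffP g (n + 1) (m + 1) := by
  set k : ℤ := n - 2 * m - 1 with hk
  have hfactor : ((3 * m + 1 - n : ℤ) : ℝ) + 1 = (m : ℝ) + 1 - k := by
    rw [hk]; push_cast; ring
  rw [airyCoeffP, airyCoeffP, airyCoeffQ, hfactor,
    show (n - 2 * (m + 1 : ℕ) - 1 : ℤ) = k - 2 by omega,
    show (n - 2 * (m + 1 : ℕ) : ℤ) = k - 1 by omega,
    show ((n + 1 : ℕ) - 2 * (m + 1 : ℕ) - 1 : ℤ) = k - 1 by omega,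
    show ((n + 1 : ℕ) - 2 * (m + 1 : ℕ) : ℤ) = k by omega, Nat.factorial_succ]
  push_cast
  linear_combination -(m ! : ℝ) * hrel m k

variable (hneg : ∀ m k, k < 0 → g m k = 0)
include hneg

theorem airyCoeffP_of_lt {n m : ℕ} (h : n < 2 * m) : airyCoeffP g n m = 0 := by
  rw [airyCoeffP, hneg _ _ (by omega), hneg _ _ (by omega), sub_zero, mul_zero]

theorem airyCoeffQ_of_le {n m : ℕ} (h : n ≤ 2 * m) : airyCoeffQ g n m = 0 := by
  rw [airyCoeffQ, hneg _ _ (by omega), mul_zero]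

theorem explicitP_zero (h00 : g 0 0 = 1) : explicitP g 0 = 1 := by
  simp [explicitP, airyCoeffP, divPow, h00, hneg 0 (-1) (by norm_num)]

theorem explicitQ_zero : explicitQ g 0 = 0 := by
  simp [explicitQ, airyCoeffQ_of_le hneg]

theorem explicitQ_succ (n : ℕ) :
    explicitP g n + derivative (explicitQ g n) = explicitQ g (n + 1) := by
  unfold explicitP explicitQ
  rw [Finset.sum_range_succ _ (n + 1), airyCoeffQ_of_le hneg (by omega), C_0, zero_mul, add_zero,
    derivative_sum, ← Finset.sum_add_distrib]
  refine Finset.sum_congr rfl fun m _ => ?_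
  rw [derivative_C_mul, derivative_divPow, show (3 * m + 1 - n - 1 : ℤ) = 3 * m - n by ring,
    show (3 * m + 1 - (n + 1 : ℕ) : ℤ) = 3 * m - n by push_cast; ring, ← add_mul, ← C_add,
    airyCoeffP, airyCoeffQ, airyCoeffQ,
    show ((n + 1 : ℕ) - 2 * m - 1 : ℤ) = n - 2 * m by push_cast; ring]
  congr 2
  ring

theorem explicitP_succ (hrel : SecondDiffRelation g) (n : ℕ) :
    derivative (explicitP g n) + X * explicitQ g n = explicitP g (n + 1) := by
  unfold explicitP explicitQ
  rw [Finset.sum_range_succ' _ (n + 1), Nat.cast_zero, mul_zero, zero_sub,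
    divPow_of_neg (by omega), mul_zero, add_zero, derivative_sum]
  simp only [derivative_C_mul, derivative_divPow]
  rw [Finset.sum_range_eq_sum_range_succ_of_eq_zero _
      (by rw [Nat.cast_zero, divPow_of_neg (by omega), mul_zero])
      (by rw [airyCoeffP_of_lt hneg (by omega), C_0, zero_mul]),
    Finset.mul_sum, ← Finset.sum_add_distrib]
  refine Finset.sum_congr rfl fun m _ => ?_
  rw [mul_left_comm, X_mul_divPow, ← mul_assoc, ← C_mul,
    show (3 * (m + 1 : ℕ) - n - 1 : ℤ) = 3 * m + 1 - n + 1 by push_cast; ring,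
    show (3 * (m + 1 : ℕ) - (n + 1 : ℕ) : ℤ) = 3 * m + 1 - n + 1 by push_cast; ring,
    ← add_mul, ← C_add, airyCoeffP_succ_succ hrel]

theorem airyPQ_eq_explicit (h00 : g 0 0 = 1) (hrel : SecondDiffRelation g) (n : ℕ) :
    airyPQ n = (explicitP g n, explicitQ g n) := by
  induction n with
  | zero => rw [explicitP_zero hneg h00, explicitQ_zero hneg]; rfl
  | succ n ih => rw [airyPQ, ih, explicitP_succ hneg hrel, explicitQ_succ hneg]

theorem eval_explicitP (n : ℕ) (x : ℝ) :
    (explicitP g n).eval x =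
      ∑ m ∈ (Finset.range (n + 1)).filter (fun m => n ≤ 3 * m ∧ 2 * m ≤ n),
        (g m ((n : ℤ) - 2 * m) - g m ((n : ℤ) - 2 * m - 1)) * (m ! : ℝ) * x ^ (3 * m - n) /
          ((3 * m - n) ! : ℝ) := by
  rw [explicitP, eval_finsetSum, Finset.sum_filter]
  refine Finset.sum_congr rfl fun m _ => ?_
  split_ifs with h
  · rw [show (3 * m - n : ℤ) = (3 * m - n : ℕ) by omega, divPow_natCast, airyCoeffP]
    simp only [eval_mul, eval_C, eval_pow, eval_X]
    ring
  · rcases not_and_or.1 h with h3 | h2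
    · rw [divPow_of_neg (by omega), mul_zero, eval_zero]
    · rw [airyCoeffP_of_lt hneg (by omega), C_0, zero_mul, eval_zero]

end Recurrence

section GTilde

noncomputable def gTildeFun (m : ℕ) (t : ℝ) : ℝ := (1 - t + t ^ 2 / 3) ^ (-(m + 1 : ℤ))

theorem gTilde_eq_taylorCoeff (m : ℕ) : gTilde m = taylorCoeff (gTildeFun m) := rfl

theorem gTilde_of_neg (m : ℕ) {k : ℤ} (hk : k < 0) : gTilde m k = 0 := if_pos hk

theorem gTilde_zero_zero : gTilde 0 0 = 1 := by
  simp [gTilde]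

theorem one_sub_add_sq_div_three_pos (t : ℝ) : 0 < 1 - t + t ^ 2 / 3 := by
  nlinarith [sq_nonneg (t - 3 / 2)]

theorem contDiff_gTildeFun (m : ℕ) : ContDiff ℝ ∞ (gTildeFun m) := by
  have hinv : gTildeFun m = fun t => ((1 - t + t ^ 2 / 3) ^ (m + 1))⁻¹ := by
    funext t
    rw [gTildeFun, show (-(m + 1 : ℤ)) = -((m + 1 : ℕ) : ℤ) by push_cast; ring, zpow_neg,
      zpow_natCast]
  rw [hinv]
  exact ContDiff.inv (by fun_prop) fun t => (pow_pos (one_sub_add_sq_div_three_pos t) _).ne'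

theorem gTildeFun_eq_mul_succ (m : ℕ) :
    gTildeFun m = fun t => (1 + (-1) * t + 1 / 3 * t ^ 2) * gTildeFun (m + 1) t := by
  funext t
  have hu := (one_sub_add_sq_div_three_pos t).ne'
  rw [gTildeFun, gTildeFun,
    show (-((m + 1 : ℕ) + 1 : ℤ)) = -(m + 1 : ℤ) - 1 by push_cast; ring,
    zpow_sub_one₀ hu, show 1 + (-1) * t + 1 / 3 * t ^ 2 = 1 - t + t ^ 2 / 3 by ring,
    mul_left_comm, mul_inv_cancel₀ hu, mul_one]

theorem deriv_gTildeFun (m : ℕ) :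
    deriv (gTildeFun m) =
      fun t => ((m + 1) + (-(2 / 3) * (m + 1)) * t + 0 * t ^ 2) * gTildeFun (m + 1) t := by
  funext t
  have hu : HasDerivAt (fun t : ℝ => 1 - t + t ^ 2 / 3) (-1 + 2 * t / 3) t := by
    refine (((hasDerivAt_const t 1).fun_sub (hasDerivAt_id' t)).fun_add
      ((hasDerivAt_pow 2 t).div_const 3)).congr_deriv ?_
    push_cast
    ring
  have hcomp : gTildeFun m = (fun u => u ^ (-(m + 1 : ℤ))) ∘ fun t => 1 - t + t ^ 2 / 3 := rfl
  have hu_ne := (one_sub_add_sq_div_three_pos t).ne'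
  rw [hcomp, ((hasDerivAt_zpow _ _ (Or.inl hu_ne)).comp t hu).deriv, gTildeFun,
    show (-((m + 1 : ℕ) + 1 : ℤ)) = -(m + 1 : ℤ) - 1 by push_cast; ring]
  push_cast
  ring

theorem secondDiffRelation_gTilde : SecondDiffRelation gTilde := by
  intro m k
  have hmul : gTilde m k =
      gTilde (m + 1) k - gTilde (m + 1) (k - 1) + 1 / 3 * gTilde (m + 1) (k - 2) := by
    rw [gTilde_eq_taylorCoeff, gTilde_eq_taylorCoeff, gTildeFun_eq_mul_succ,
      taylorCoeff_quadratic_mul (contDiff_gTildeFun _)]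
    ring
  have hderiv : (k : ℝ) * gTilde m k =
      ((m : ℝ) + 1) * (gTilde (m + 1) (k - 1) - 2 / 3 * gTilde (m + 1) (k - 2)) := by
    have := taylorCoeff_deriv (f := gTildeFun m) (k - 1)
    rw [deriv_gTildeFun, taylorCoeff_quadratic_mul (contDiff_gTildeFun _), sub_add_cancel,
      show k - 1 - 1 = k - 2 by ring] at this
    rw [gTilde_eq_taylorCoeff, gTilde_eq_taylorCoeff]
    push_cast at this
    linear_combination -this
  linear_combination hderiv - ((m : ℝ) + 1) * hmul

end GTilde

theorem airyP_explicit (n : ℕ) (x : ℝ) :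
    (airyP n).eval x =
      ∑ m ∈ (Finset.range (n + 1)).filter (fun m => n ≤ 3 * m ∧ 2 * m ≤ n),
        (gTilde m ((n : ℤ) - 2 * m) - gTilde m ((n : ℤ) - 2 * m - 1)) *
          (Nat.factorial m : ℝ) * x ^ (3 * m - n) /
          (Nat.factorial (3 * m - n) : ℝ) := by
  have hneg : ∀ (m : ℕ) (k : ℤ), k < 0 → gTilde m k = 0 := fun m _ => gTilde_of_neg m
  rw [airyP, airyPQ_eq_explicit hneg gTilde_zero_zero secondDiffRelation_gTilde,
    eval_explicitP hneg]
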